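/- arXiv:0803.2221 — 3 statements merged into one kernel-verified Lean document; each statement's English description precedes it below -/
import Mathlib

section
/- Let 𝔤 be a Lie algebra and W a Lie triple system with 𝔤 = W + [W,W]. Then the intersection W ∩ [W,W] is an ideal of 𝔤. -/
/-- The span of all brackets `⁅x, y⁆` with `x ∈ W`, `y ∈ U`. -/
def bracketSub {K : Type*} [Field K] {L : Type*} [LieRing L] [LieAlgebra K L]
    (W U : Submodule K L) : Submodule K L :=
  Submodule.span K {z | ∃ x ∈ W, ∃ y ∈ U, z = ⁅x, y⁆}

lemma mem_bracketSub {K : Type*} [Field K] {L : Type*} [LieRing L] [LieAlgebra K L]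
    {W U : Submodule K L} {x y : L} (hx : x ∈ W) (hy : y ∈ U) :
    ⁅x, y⁆ ∈ bracketSub W U :=
  Submodule.subset_span ⟨x, hx, y, hy, rfl⟩

/-- If y ∈ [W,W] and x ∈ W, then ⁅x,y⁆ ∈ W (using LTS). -/
lemma lieW_bracket_mem {K : Type*} [Field K] {L : Type*} [LieRing L] [LieAlgebra K L]
    {W : Submodule K L}
    (hLTS : ∀ x ∈ W, ∀ y ∈ W, ∀ z ∈ W, ⁅⁅x, y⁆, z⁆ ∈ W)
    {x y : L} (hx : x ∈ W) (hy : y ∈ bracketSub W W) : ⁅x, y⁆ ∈ W := by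
  induction hy using Submodule.span_induction with
  | mem z hz =>
    obtain ⟨a, ha, b, hb, rfl⟩ := hz
    have : ⁅⁅a, b⁆, x⁆ ∈ W := hLTS a ha b hb x hx
    have h2 : ⁅x, ⁅a, b⁆⁆ = -⁅⁅a, b⁆, x⁆ := (lie_skew _ _).symm
    rw [h2]
    exact W.neg_mem this
  | zero => simp only [zero_lie, lie_zero]; exact W.zero_mem
  | add u v _ _ hu hv => rw [lie_add]; exact W.add_mem hu hv
  | smul c u _ hu => rw [lie_smul]; exact W.smul_mem c hu

/-- If `W` is a Lie triple system with `𝔤 = W + [W,W]`, then `W ∩ [W,W]`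
is an ideal of `𝔤`. -/
theorem stmt5 {K : Type*} [Field K] {L : Type*} [LieRing L] [LieAlgebra K L]
    (W : Submodule K L)
    (hLTS : ∀ x ∈ W, ∀ y ∈ W, ∀ z ∈ W, ⁅⁅x, y⁆, z⁆ ∈ W)
    (hfull : W ⊔ bracketSub W W = ⊤) :
    ∀ x : L, ∀ y ∈ W ⊓ bracketSub W W, ⁅x, y⁆ ∈ W ⊓ bracketSub W W := by
  -- First: x ∈ W case
  have hA : ∀ x ∈ W, ∀ y ∈ W ⊓ bracketSub W W, ⁅x, y⁆ ∈ W ⊓ bracketSub W W := by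
    intro x hx y hy
    exact ⟨lieW_bracket_mem hLTS hx hy.2, mem_bracketSub hx hy.1⟩
  -- Second: x ∈ [W,W] case
  have hB : ∀ x ∈ bracketSub W W, ∀ y ∈ W ⊓ bracketSub W W,
      ⁅x, y⁆ ∈ W ⊓ bracketSub W W := by
    intro x hx
    induction hx using Submodule.span_induction with
    | mem z hz =>
      obtain ⟨a, ha, b, hb, rfl⟩ := hz
      intro y hy
      refine ⟨hLTS a ha b hb y hy.1, ?_⟩
      have hby : ⁅b, y⁆ ∈ W ⊓ bracketSub W W := hA b hb y hy
      have hay : ⁅a, y⁆ ∈ W ⊓ bracketSub W W := hA a ha y hy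
      have hjac : ⁅⁅a, b⁆, y⁆ = ⁅a, ⁅b, y⁆⁆ - ⁅b, ⁅a, y⁆⁆ := by
        rw [lie_lie]
      rw [hjac]
      exact Submodule.sub_mem _ (mem_bracketSub ha hby.1) (mem_bracketSub hb hay.1)
    | zero => intro y hy; simp only [zero_lie, lie_zero]; exact (W ⊓ bracketSub W W).zero_mem
    | add u v _ _ hu hv =>
      intro y hy
      rw [add_lie]
      exact Submodule.add_mem _ (hu y hy) (hv y hy)
    | smul c u _ hu =>
      intro y hy
      rw [smul_lie]
      exact Submodule.smul_mem _ c (hu y hy)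
  intro x y hy
  have hx : x ∈ W ⊔ bracketSub W W := by rw [hfull]; exact Submodule.mem_top
  obtain ⟨w, hw, u, hu, rfl⟩ := Submodule.mem_sup.mp hx
  rw [add_lie]
  exact Submodule.add_mem _ (hA w hw y hy) (hB u hu y hy)
end

section
/- Let 𝔤 be a Lie algebra that is a direct sum of ideals 𝔤 = ⊕_{l=1}^m 𝔰_l with each 𝔰_l simple, and let W ⊆ 𝔤 be a subspace with 𝔤 = W + [W,W], W ∩ [W,W] = 0, and such that the projections P_l(W) satisfy P_l(W) ∩ [P_l(W),P_l(W)] = 0 for all l. Then W = ⊕_{l=1}^m W_l where W_l = P_l(W) ⊆ 𝔰_l, each W_l is nonzero and W_l ≠ 𝔰_l, assuming additionally that W is a Lie triple system and the inner product on 𝔤 makes the 𝔰_l orthogonal with invariant restrictions and W = ([W,W])^⊥. -/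
open scoped RealInnerProductSpace

def bSpan {E : Type*} [NormedAddCommGroup E] [InnerProductSpace ℝ E]
    (b : E →ₗ[ℝ] E →ₗ[ℝ] E) (W U : Submodule ℝ E) : Submodule ℝ E :=
  Submodule.span ℝ {z | ∃ x ∈ W, ∃ y ∈ U, z = b x y}

/-!
Let `θ` be the reflection of `𝔤` in `[W,W]`: it fixes `[W,W]` and negates `W = [W,W]ᗮ`.
Because `W` is a Lie triple system, `[[W,W],W] ⊆ W`, and then Jacobi gives
`[[W,W],[W,W]] ⊆ [W,W]`; this grading makes `θ` a Lie algebra automorphism.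
Every nonzero ideal `I` contains some `𝔰ⱼ` (if `Pⱼ(I) ≠ 0` then
`Pⱼ(I) = 𝔰ⱼ = [𝔰ⱼ,𝔰ⱼ] = [𝔰ⱼ,I] ⊆ I`), hence automorphisms permute the simple ideals.
If `θ(𝔰ₗ) = 𝔰ⱼ` with `j ≠ l`, then `x - θx ∈ W` and `Pₗ(x - θx) = x` for `x ∈ 𝔰ₗ`, so
`Pₗ(W) = 𝔰ₗ`, contradicting `Pₗ(W) ∩ [Pₗ(W),Pₗ(W)] = 0` since `𝔰ₗ = [𝔰ₗ,𝔰ₗ]`.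
So `θ` preserves every `𝔰ₗ`, commutes with every `Pₗ`, and `Pₗ` maps the `(-1)`-eigenspace
`W` into itself. Finally `Pₗ(W) ≠ 0` because `Pₗ` is a homomorphism and `W` generates `𝔤`.
-/

section

open Submodule

variable {E : Type*} [NormedAddCommGroup E] [InnerProductSpace ℝ E]

structure IsLieBracket (b : E →ₗ[ℝ] E →ₗ[ℝ] E) : Prop where
  skew : ∀ x y, b x y = -b y x
  jacobi : ∀ x y z, b (b x y) z + b (b y z) x + b (b z x) y = 0

def IsBracketIdeal (b : E →ₗ[ℝ] E →ₗ[ℝ] E) (I : Submodule ℝ E) : Prop :=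
  ∀ x : E, ∀ y ∈ I, b x y ∈ I

structure IsSimpleBracketIdeal (b : E →ₗ[ℝ] E →ₗ[ℝ] E) (S : Submodule ℝ E) : Prop where
  bSpan_ne_bot : bSpan b S S ≠ ⊥
  eq_bot_or_eq : ∀ I, I ≤ S → IsBracketIdeal b I → I = ⊥ ∨ I = S

def IsLieTripleSystem (b : E →ₗ[ℝ] E →ₗ[ℝ] E) (W : Submodule ℝ E) : Prop :=
  ∀ x ∈ W, ∀ y ∈ W, ∀ z ∈ W, b (b x y) z ∈ W

structure IsOrthogonalIdealDecomposition {ι : Type*} (b : E →ₗ[ℝ] E →ₗ[ℝ] E)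
    (S : ι → Submodule ℝ E) : Prop where
  iSup_eq_top : ⨆ i, S i = ⊤
  pairwise_isOrtho : Pairwise fun i j => S i ⟂ S j
  isIdeal : ∀ i, IsBracketIdeal b (S i)

theorem LinearMap.ext_of_iSup_eq_top {R M N ι : Type*} [Semiring R] [AddCommMonoid M]
    [AddCommMonoid N] [Module R M] [Module R N] {S : ι → Submodule R M} (hS : ⨆ i, S i = ⊤)
    {f g : M →ₗ[R] N} (h : ∀ i, ∀ x ∈ S i, f x = g x) : f = g :=
  eqLocus_eq_top.1 <| eq_top_iff.2 <| hS ▸ iSup_le fun i x hx => h i x hx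

theorem Submodule.map_starProjection_le (K V : Submodule ℝ E) [K.HasOrthogonalProjection] :
    V.map (K.starProjection : E →ₗ[ℝ] E) ≤ K := by
  rintro _ ⟨x, -, rfl⟩
  exact K.starProjection_apply_mem x

theorem Submodule.reflection_eq_neg_iff (K : Submodule ℝ E) [K.HasOrthogonalProjection] {v : E} :
    K.reflection v = -v ↔ v ∈ Kᗮ := by
  rw [← Kᗮ.reflection_eq_self_iff, reflection_orthogonal_apply, neg_eq_iff_eq_neg]

section Bracket

variable {b : E →ₗ[ℝ] E →ₗ[ℝ] E}

theorem bSpan_le_iff {W U V : Submodule ℝ E} :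
    bSpan b W U ≤ V ↔ ∀ x ∈ W, ∀ y ∈ U, b x y ∈ V := by
  refine span_le.trans ⟨fun h x hx y hy => h ⟨x, hx, y, hy, rfl⟩, ?_⟩
  rintro h _ ⟨x, hx, y, hy, rfl⟩
  exact h x hx y hy

theorem bracket_mem_bSpan {W U : Submodule ℝ E} {x y : E} (hx : x ∈ W) (hy : y ∈ U) :
    b x y ∈ bSpan b W U :=
  subset_span ⟨x, hx, y, hy, rfl⟩

theorem eq_zero_of_map_eq_bot {f : E →ₗ[ℝ] E} (hf : ∀ x y, f (b x y) = b (f x) (f y))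
    {W : Submodule ℝ E} (hW : W ⊔ bSpan b W W = ⊤) (hfW : W.map f = ⊥) : f = 0 := by
  have hWker : W ≤ LinearMap.ker f := LinearMap.le_ker_iff_map.2 hfW
  have hbSpan : bSpan b W W ≤ LinearMap.ker f := bSpan_le_iff.2 fun u hu v hv => by
    rw [LinearMap.mem_ker, hf, hWker hu, hWker hv, map_zero]
  exact LinearMap.ker_eq_top.1 (top_unique (hW ▸ sup_le hWker hbSpan))

theorem isBracketIdeal_map_equiv (e : E ≃ₗ[ℝ] E) (he : ∀ x y, e (b x y) = b (e x) (e y))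
    {I : Submodule ℝ E} (hI : IsBracketIdeal b I) : IsBracketIdeal b (I.map (e : E →ₗ[ℝ] E)) := by
  rintro x _ ⟨s, hs, rfl⟩
  exact ⟨b (e.symm x) s, hI _ s hs, by simp [he]⟩

theorem LinearEquiv.symm_bracket (e : E ≃ₗ[ℝ] E) (he : ∀ x y, e (b x y) = b (e x) (e y))
    (x y : E) : e.symm (b x y) = b (e.symm x) (e.symm y) :=
  e.injective (by simp [he])

namespace IsLieBracket

theorem bracket_bracket (hb : IsLieBracket b) (x y z : E) :
    b x (b y z) = b (b x y) z + b y (b x z) := by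
  have h := hb.jacobi x y z
  rw [hb.skew (b y z) x, hb.skew z x, map_neg, LinearMap.neg_apply, ← hb.skew y (b x z)] at h
  linear_combination (norm := module) -h

theorem bracket_mem_left (hb : IsLieBracket b) {I : Submodule ℝ E} (hI : IsBracketIdeal b I)
    {x : E} (hx : x ∈ I) (y : E) : b x y ∈ I := by
  rw [hb.skew]
  exact neg_mem (hI y x hx)

theorem isBracketIdeal_bSpan (hb : IsLieBracket b) {S : Submodule ℝ E}
    (hS : IsBracketIdeal b S) : IsBracketIdeal b (bSpan b S S) := fun x _ hy =>
  bSpan_le_iff (V := (bSpan b S S).comap (b x)).2 (fun u hu v hv => by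
    rw [mem_comap, hb.bracket_bracket]
    exact add_mem (bracket_mem_bSpan (hS x u hu) hv) (bracket_mem_bSpan hu (hS x v hv))) hy

theorem reflection_bracket (hb : IsLieBracket b) (K : Submodule ℝ E) [K.HasOrthogonalProjection]
    (hKK : ∀ x ∈ K, ∀ y ∈ K, b x y ∈ K) (hKO : ∀ x ∈ K, ∀ y ∈ Kᗮ, b x y ∈ Kᗮ)
    (hOO : ∀ x ∈ Kᗮ, ∀ y ∈ Kᗮ, b x y ∈ K) (x y : E) :
    K.reflection (b x y) = b (K.reflection x) (K.reflection y) := by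
  obtain ⟨p, hp, q, hq, rfl⟩ := K.exists_add_mem_mem_orthogonal x
  obtain ⟨p', hp', q', hq', rfl⟩ := K.exists_add_mem_mem_orthogonal y
  have hqp' : b q p' ∈ Kᗮ := by
    rw [hb.skew]
    exact neg_mem (hKO p' hp' q hq)
  simp only [map_add, LinearMap.add_apply, reflection_mem_subspace_eq_self, hp, hp', hKK,
    reflection_mem_subspace_orthogonalComplement_eq_neg, hq, hq', hKO, hqp', hOO, map_neg,
    LinearMap.neg_apply]
  abel

end IsLieBracket

namespace IsSimpleBracketIdeal

variable {S : Submodule ℝ E}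

theorem ne_bot (hS : IsSimpleBracketIdeal b S) : S ≠ ⊥ := by
  rintro rfl
  refine hS.bSpan_ne_bot (eq_bot_iff.2 (bSpan_le_iff.2 fun x hx y _ => ?_))
  rw [(mem_bot ℝ).1 hx, map_zero, LinearMap.zero_apply]
  exact zero_mem _

theorem eq_of_le (hS : IsSimpleBracketIdeal b S) {I : Submodule ℝ E} (hI : IsBracketIdeal b I)
    (hIS : I ≤ S) (hI0 : I ≠ ⊥) : I = S :=
  (hS.eq_bot_or_eq I hIS hI).resolve_left hI0

theorem bSpan_self (hS : IsSimpleBracketIdeal b S) (hb : IsLieBracket b)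
    (hSI : IsBracketIdeal b S) : bSpan b S S = S :=
  hS.eq_of_le (hb.isBracketIdeal_bSpan hSI) (bSpan_le_iff.2 fun x _ y hy => hSI x y hy)
    hS.bSpan_ne_bot

theorem ne_of_inf_bSpan_eq_bot (hS : IsSimpleBracketIdeal b S) (hb : IsLieBracket b)
    (hSI : IsBracketIdeal b S) {V : Submodule ℝ E} (hV : V ⊓ bSpan b V V = ⊥) : V ≠ S := by
  rintro rfl
  rw [hS.bSpan_self hb hSI, inf_idem] at hV
  exact hS.ne_bot hV

end IsSimpleBracketIdeal

namespace IsLieTripleSystem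

variable {W : Submodule ℝ E}

theorem bracket_mem_of_mem_bSpan (hT : IsLieTripleSystem b W) {h x : E}
    (hh : h ∈ bSpan b W W) (hx : x ∈ W) : b h x ∈ W :=
  bSpan_le_iff (V := W.comap (b.flip x)).2 (fun u hu v hv => hT u hu v hv x hx) hh

theorem bracket_mem_bSpan_of_mem_bSpan (hT : IsLieTripleSystem b W) (hb : IsLieBracket b) {h h' : E}
    (hh : h ∈ bSpan b W W) (hh' : h' ∈ bSpan b W W) : b h h' ∈ bSpan b W W :=
  bSpan_le_iff (V := (bSpan b W W).comap (b h)).2 (fun u hu v hv => by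
    rw [mem_comap, hb.bracket_bracket]
    exact add_mem (bracket_mem_bSpan (hT.bracket_mem_of_mem_bSpan hh hu) hv)
      (bracket_mem_bSpan hu (hT.bracket_mem_of_mem_bSpan hh hv))) hh'

theorem reflection_bSpan_bracket (hT : IsLieTripleSystem b W) (hb : IsLieBracket b)
    (hW : W = (bSpan b W W)ᗮ) [(bSpan b W W).HasOrthogonalProjection] (x y : E) :
    (bSpan b W W).reflection (b x y) =
      b ((bSpan b W W).reflection x) ((bSpan b W W).reflection y) := by
  refine hb.reflection_bracket _ (fun _ hh _ hh' => hT.bracket_mem_bSpan_of_mem_bSpan hb hh hh')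
    (fun _ hh _ hx => ?_) (fun _ hx _ hy => ?_) x y
  · rw [← hW] at hx ⊢
    exact hT.bracket_mem_of_mem_bSpan hh hx
  · rw [← hW] at hx hy
    exact bracket_mem_bSpan hx hy

end IsLieTripleSystem
end Bracket

section Projections

variable {ι : Type*} {S : ι → Submodule ℝ E} [∀ i, (S i).HasOrthogonalProjection]

theorem starProjection_apply_eq_zero_of_ne (hortho : Pairwise fun i j => S i ⟂ S j) {i j : ι}
    (hij : i ≠ j) {x : E} (hx : x ∈ S j) : (S i).starProjection x = 0 :=
  ((S i).starProjection_apply_eq_zero_iff).2 (hortho hij.symm hx)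

theorem starProjection_comm_of_map_le (htop : ⨆ i, S i = ⊤)
    (hortho : Pairwise fun i j => S i ⟂ S j) {f : E →ₗ[ℝ] E}
    (hf : ∀ j, (S j).map f ≤ S j) (i : ι) (x : E) :
    (S i).starProjection (f x) = f ((S i).starProjection x) := by
  refine LinearMap.congr_fun (LinearMap.ext_of_iSup_eq_top
    (f := (S i).starProjection.toLinearMap ∘ₗ f) (g := f ∘ₗ (S i).starProjection) htop
    fun j y hy => ?_) x
  have hfy : f y ∈ S j := hf j (mem_map_of_mem hy)
  rcases eq_or_ne i j with rfl | hij
  · simp [starProjection_eq_self_iff.2 hy, starProjection_eq_self_iff.2 hfy]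
  · simp [starProjection_apply_eq_zero_of_ne hortho hij hy,
      starProjection_apply_eq_zero_of_ne hortho hij hfy]

theorem sum_starProjection [Fintype ι] (htop : ⨆ i, S i = ⊤)
    (hortho : Pairwise fun i j => S i ⟂ S j) (x : E) : ∑ i, (S i).starProjection x = x := by
  classical
  have : ∑ i, ((S i).starProjection : E →ₗ[ℝ] E) = LinearMap.id :=
    LinearMap.ext_of_iSup_eq_top htop fun j y hy => by
      simp only [LinearMap.sum_apply, ContinuousLinearMap.coe_coe, LinearMap.id_apply]
      rw [Finset.sum_eq_single j
        (fun i _ hij => starProjection_apply_eq_zero_of_ne hortho hij hy) (by simp)]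
      exact starProjection_eq_self_iff.2 hy
  simpa using LinearMap.congr_fun this x

theorem le_iSup_map_starProjection [Fintype ι] (htop : ⨆ i, S i = ⊤)
    (hortho : Pairwise fun i j => S i ⟂ S j) (V : Submodule ℝ E) :
    V ≤ ⨆ i, V.map ((S i).starProjection : E →ₗ[ℝ] E) := fun x hx =>
  sum_starProjection htop hortho x ▸ sum_mem fun i _ => mem_iSup_of_mem i (mem_map_of_mem hx)

end Projections

namespace IsOrthogonalIdealDecomposition

variable {ι : Type*} {b : E →ₗ[ℝ] E →ₗ[ℝ] E} {S : ι → Submodule ℝ E}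

theorem bracket_eq_zero_of_ne (hD : IsOrthogonalIdealDecomposition b S) (hb : IsLieBracket b)
    {i j : ι} (hij : i ≠ j) {x y : E} (hx : x ∈ S i) (hy : y ∈ S j) : b x y = 0 :=
  disjoint_def.1 (hD.pairwise_isOrtho hij).disjoint _
    (hb.bracket_mem_left (hD.isIdeal i) hx y) (hD.isIdeal j x y hy)

variable [∀ i, (S i).HasOrthogonalProjection]

theorem bracket_starProjection_left (hD : IsOrthogonalIdealDecomposition b S)
    (hb : IsLieBracket b) {i : ι} {y : E} (hy : y ∈ S i) (x : E) :
    b ((S i).starProjection x) y = b x y := by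
  refine LinearMap.congr_fun (LinearMap.ext_of_iSup_eq_top
    (f := b.flip y ∘ₗ (S i).starProjection) (g := b.flip y) hD.iSup_eq_top fun j z hz => ?_) x
  rcases eq_or_ne i j with rfl | hij
  · simp [starProjection_eq_self_iff.2 hz]
  · simp [starProjection_apply_eq_zero_of_ne hD.pairwise_isOrtho hij hz,
      hD.bracket_eq_zero_of_ne hb hij.symm hz hy]

theorem starProjection_bracket (hD : IsOrthogonalIdealDecomposition b S) (hb : IsLieBracket b)
    (i : ι) (x y : E) :
    (S i).starProjection (b x y) = b ((S i).starProjection x) ((S i).starProjection y) := by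
  refine LinearMap.congr_fun (LinearMap.ext_of_iSup_eq_top
    (f := (S i).starProjection.toLinearMap ∘ₗ b x)
    (g := b ((S i).starProjection x) ∘ₗ (S i).starProjection) hD.iSup_eq_top
    fun j z hz => ?_) y
  rcases eq_or_ne i j with rfl | hij
  · simp [starProjection_eq_self_iff.2 hz, starProjection_eq_self_iff.2 (hD.isIdeal i x z hz),
      hD.bracket_starProjection_left hb hz]
  · simp [starProjection_apply_eq_zero_of_ne hD.pairwise_isOrtho hij hz,
      starProjection_apply_eq_zero_of_ne hD.pairwise_isOrtho hij (hD.isIdeal j x z hz)]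

theorem isBracketIdeal_map_starProjection (hD : IsOrthogonalIdealDecomposition b S)
    (hb : IsLieBracket b) (i : ι) {I : Submodule ℝ E} (hI : IsBracketIdeal b I) :
    IsBracketIdeal b (I.map ((S i).starProjection : E →ₗ[ℝ] E)) := by
  rintro x _ ⟨z, hz, rfl⟩
  refine ⟨b x z, hI x z hz, ?_⟩
  simp [hD.starProjection_bracket hb,
    hD.bracket_starProjection_left hb (starProjection_apply_mem _ _)]

theorem map_starProjection_le (hD : IsOrthogonalIdealDecomposition b S) (hb : IsLieBracket b)
    {i : ι} (hS : IsSimpleBracketIdeal b (S i)) {I : Submodule ℝ E} (hI : IsBracketIdeal b I) :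
    I.map ((S i).starProjection : E →ₗ[ℝ] E) ≤ I := by
  rcases hS.eq_bot_or_eq _ ((S i).map_starProjection_le I)
    (hD.isBracketIdeal_map_starProjection hb i hI) with h | h
  · exact h.le.trans bot_le
  · have hSI : S i ≤ I := calc
      S i = bSpan b (S i) (S i) := (hS.bSpan_self hb (hD.isIdeal i)).symm
      _ = bSpan b (S i) (I.map ((S i).starProjection : E →ₗ[ℝ] E)) := congrArg _ h.symm
      _ ≤ I := bSpan_le_iff.2 ?_
    · exact h.le.trans hSI
    rintro s hs _ ⟨z, hz, rfl⟩
    have hsz : b s z ∈ S i := hb.bracket_mem_left (hD.isIdeal i) hs z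
    have : b s ((S i).starProjection z) = b s z := by
      rw [← starProjection_eq_self_iff.2 hs, ← hD.starProjection_bracket hb,
        starProjection_eq_self_iff.2 hsz, starProjection_eq_self_iff.2 hs]
    exact this ▸ hI s z hz

theorem exists_le_of_isBracketIdeal [Fintype ι] (hD : IsOrthogonalIdealDecomposition b S)
    (hb : IsLieBracket b) (hS : ∀ i, IsSimpleBracketIdeal b (S i)) {I : Submodule ℝ E}
    (hI : IsBracketIdeal b I) (hI0 : I ≠ ⊥) : ∃ j, S j ≤ I := by
  obtain ⟨j, hj⟩ : ∃ j, I.map ((S j).starProjection : E →ₗ[ℝ] E) ≠ ⊥ := by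
    by_contra! h
    exact hI0 (eq_bot_iff.2 ((le_iSup_map_starProjection hD.iSup_eq_top hD.pairwise_isOrtho I).trans
      (iSup_le fun j => (h j).le)))
  refine ⟨j, ?_⟩
  rw [← (hS j).eq_of_le (hD.isBracketIdeal_map_starProjection hb j hI)
    ((S j).map_starProjection_le I) hj]
  exact hD.map_starProjection_le hb (hS j) hI

theorem exists_map_equiv_eq [Fintype ι] (hD : IsOrthogonalIdealDecomposition b S)
    (hb : IsLieBracket b) (hS : ∀ i, IsSimpleBracketIdeal b (S i)) (e : E ≃ₗ[ℝ] E)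
    (he : ∀ x y, e (b x y) = b (e x) (e y)) (i : ι) : ∃ j, (S i).map (e : E →ₗ[ℝ] E) = S j := by
  obtain ⟨j, hj⟩ := hD.exists_le_of_isBracketIdeal hb hS
    (isBracketIdeal_map_equiv e he (hD.isIdeal i)) (by simpa using (hS i).ne_bot)
  refine ⟨j, (map_symm_eq_iff e).1 ((hS i).eq_of_le
    (isBracketIdeal_map_equiv e.symm (e.symm_bracket he) (hD.isIdeal j)) ?_ ?_)⟩
  · exact (map_mono hj).trans ((map_symm_eq_iff e).2 rfl).le
  · simpa using (hS j).ne_bot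

theorem map_starProjection_ne_bot (hD : IsOrthogonalIdealDecomposition b S) (hb : IsLieBracket b)
    {i : ι} (hSi : S i ≠ ⊥) {W : Submodule ℝ E} (hW : W ⊔ bSpan b W W = ⊤) :
    W.map ((S i).starProjection : E →ₗ[ℝ] E) ≠ ⊥ := by
  intro h
  have hP := eq_zero_of_map_eq_bot (hD.starProjection_bracket hb i) hW h
  exact hSi (eq_bot_iff.2 fun x hx => by
    simpa [starProjection_eq_self_iff.2 hx] using LinearMap.congr_fun hP x)

end IsOrthogonalIdealDecomposition

namespace IsLieTripleSystem

variable {ι : Type*} [Fintype ι] {b : E →ₗ[ℝ] E →ₗ[ℝ] E} {S : ι → Submodule ℝ E}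
  [∀ i, (S i).HasOrthogonalProjection] {W : Submodule ℝ E} [(bSpan b W W).HasOrthogonalProjection]

theorem map_reflection_eq_self (hT : IsLieTripleSystem b W) (hW : W = (bSpan b W W)ᗮ)
    (hb : IsLieBracket b) (hD : IsOrthogonalIdealDecomposition b S)
    (hS : ∀ i, IsSimpleBracketIdeal b (S i))
    (hne : ∀ i, W.map ((S i).starProjection : E →ₗ[ℝ] E) ≠ S i) (i : ι) :
    (S i).map ((bSpan b W W).reflection.toLinearEquiv : E →ₗ[ℝ] E) = S i := by
  set θ := (bSpan b W W).reflection
  obtain ⟨j, hj⟩ :=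
    hD.exists_map_equiv_eq hb hS θ.toLinearEquiv (hT.reflection_bSpan_bracket hb hW) i
  rcases eq_or_ne j i with rfl | hji
  · exact hj
  -- if `θ` moved `S i` to `S j`, then `x - θ x ∈ W` would project to `x` for every `x ∈ S i`
  refine absurd (le_antisymm ((S i).map_starProjection_le W) fun x hx => ⟨x - θ x, ?_, ?_⟩) (hne i)
  · rw [SetLike.mem_coe, hW, ← reflection_eq_neg_iff, map_sub, reflection_reflection, neg_sub]
  · have hθx : θ x ∈ S j := hj ▸ mem_map_of_mem hx
    simp [starProjection_eq_self_iff.2 hx,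
      starProjection_apply_eq_zero_of_ne hD.pairwise_isOrtho hji.symm hθx]

theorem map_starProjection_le (hT : IsLieTripleSystem b W) (hW : W = (bSpan b W W)ᗮ)
    (hb : IsLieBracket b) (hD : IsOrthogonalIdealDecomposition b S)
    (hS : ∀ i, IsSimpleBracketIdeal b (S i))
    (hne : ∀ i, W.map ((S i).starProjection : E →ₗ[ℝ] E) ≠ S i) (i : ι) :
    W.map ((S i).starProjection : E →ₗ[ℝ] E) ≤ W := by
  rintro _ ⟨w, hw, rfl⟩
  rw [SetLike.mem_coe, hW, ← reflection_eq_neg_iff] at hw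
  rw [hW, ← reflection_eq_neg_iff]
  have := starProjection_comm_of_map_le hD.iSup_eq_top hD.pairwise_isOrtho
    (fun j => (hT.map_reflection_eq_self hW hb hD hS hne j).le) i w
  simpa [hw] using this.symm

end IsLieTripleSystem

end

theorem stmt10_general {E : Type*} [NormedAddCommGroup E] [InnerProductSpace ℝ E]
    [FiniteDimensional ℝ E]
    (b : E →ₗ[ℝ] E →ₗ[ℝ] E)
    (hskew : ∀ X Y : E, b X Y = - b Y X)
    (hjacobi : ∀ X Y Z : E, b (b X Y) Z + b (b Y Z) X + b (b Z X) Y = 0)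
    {m : ℕ} (S : Fin m → Submodule ℝ E)
    (hSup : (⨆ l, S l) = ⊤)
    (horth : ∀ l l', l ≠ l' → ∀ x ∈ S l, ∀ y ∈ S l', ⟪x, y⟫ = 0)
    (hideal : ∀ l, ∀ x : E, ∀ y ∈ S l, b x y ∈ S l)
    (hsimple : ∀ l, bSpan b (S l) (S l) ≠ ⊥ ∧
      ∀ I : Submodule ℝ E, I ≤ S l → (∀ x : E, ∀ y ∈ I, b x y ∈ I) → I = ⊥ ∨ I = S l)
    (W : Submodule ℝ E)
    (hLTS : ∀ x ∈ W, ∀ y ∈ W, ∀ z ∈ W, b (b x y) z ∈ W)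
    (hsup : W ⊔ bSpan b W W = ⊤)
    (hWperp : W = (bSpan b W W)ᗮ)
    (P : Fin m → E →ₗ[ℝ] E)
    (hP : ∀ l, P l = (S l).subtype ∘ₗ (S l).orthogonalProjection.toLinearMap)
    (hproj : ∀ l, Submodule.map (P l) W ⊓
        bSpan b (Submodule.map (P l) W) (Submodule.map (P l) W) = ⊥) :
    (∀ l, Submodule.map (P l) W ≤ S l ∧ Submodule.map (P l) W ≠ ⊥
        ∧ Submodule.map (P l) W ≠ S l)
    ∧ (⨆ l, Submodule.map (P l) W) = W := by
  obtain rfl : P = fun l => ((S l).starProjection : E →ₗ[ℝ] E) := funext hP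
  have hb : IsLieBracket b := ⟨hskew, hjacobi⟩
  have hD : IsOrthogonalIdealDecomposition b S :=
    ⟨hSup, fun i j hij => Submodule.isOrtho_iff_inner_eq.2 (horth i j hij), hideal⟩
  have hS l : IsSimpleBracketIdeal b (S l) := ⟨(hsimple l).1, (hsimple l).2⟩
  have hne l : W.map ((S l).starProjection : E →ₗ[ℝ] E) ≠ S l :=
    (hS l).ne_of_inf_bSpan_eq_bot hb (hideal l) (hproj l)
  refine ⟨fun l => ⟨(S l).map_starProjection_le W,
    hD.map_starProjection_ne_bot hb (hS l).ne_bot hsup, hne l⟩, le_antisymm ?_ ?_⟩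
  · exact iSup_le (IsLieTripleSystem.map_starProjection_le hLTS hWperp hb hD hS hne)
  · exact le_iSup_map_starProjection hSup hD.pairwise_isOrtho W

/-- Let `𝔤 = ⊕ 𝔰ₗ` be an orthogonal direct sum of simple ideals (w.r.t. an
invariant inner product), `W` a Lie triple system with `𝔤 = W + [W,W]`, `W ∩ [W,W] = 0`,
`W = ([W,W])ᗮ`, and `Pₗ(W) ∩ [Pₗ(W),Pₗ(W)] = 0` for all `l` (`Pₗ` the orthogonal
projection onto `𝔰ₗ`). Then `W = ⊕ Wₗ` with `Wₗ = Pₗ(W) ⊆ 𝔰ₗ` nonzero and `Wₗ ≠ 𝔰ₗ`. -/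
theorem stmt10 {E : Type*} [NormedAddCommGroup E] [InnerProductSpace ℝ E]
    [FiniteDimensional ℝ E]
    (b : E →ₗ[ℝ] E →ₗ[ℝ] E)
    (hskew : ∀ X Y : E, b X Y = - b Y X)
    (hjacobi : ∀ X Y Z : E, b (b X Y) Z + b (b Y Z) X + b (b Z X) Y = 0)
    (hinv : ∀ X Y Z : E, ⟪b X Y, Z⟫ = ⟪X, b Y Z⟫)
    {m : ℕ} (S : Fin m → Submodule ℝ E)
    (hSup : (⨆ l, S l) = ⊤)
    (horth : ∀ l l', l ≠ l' → ∀ x ∈ S l, ∀ y ∈ S l', ⟪x, y⟫ = 0)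
    (hideal : ∀ l, ∀ x : E, ∀ y ∈ S l, b x y ∈ S l)
    (hsimple : ∀ l, bSpan b (S l) (S l) ≠ ⊥ ∧
      ∀ I : Submodule ℝ E, I ≤ S l → (∀ x : E, ∀ y ∈ I, b x y ∈ I) → I = ⊥ ∨ I = S l)
    (W : Submodule ℝ E)
    (hLTS : ∀ x ∈ W, ∀ y ∈ W, ∀ z ∈ W, b (b x y) z ∈ W)
    (hsup : W ⊔ bSpan b W W = ⊤)
    (hmeet : W ⊓ bSpan b W W = ⊥)
    (hWperp : W = (bSpan b W W)ᗮ)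
    (P : Fin m → E →ₗ[ℝ] E)
    (hP : ∀ l, P l = (S l).subtype ∘ₗ (S l).orthogonalProjection.toLinearMap)
    (hproj : ∀ l, Submodule.map (P l) W ⊓
        bSpan b (Submodule.map (P l) W) (Submodule.map (P l) W) = ⊥) :
    (∀ l, Submodule.map (P l) W ≤ S l ∧ Submodule.map (P l) W ≠ ⊥
        ∧ Submodule.map (P l) W ≠ S l)
    ∧ (⨆ l, Submodule.map (P l) W) = W :=
  stmt10_general b hskew hjacobi S hSup horth hideal hsimple W hLTS hsup hWperp P hP hproj
end

section
/- In 𝔰𝔬(3) ⊕ 𝔰𝔬(3) with inner product ⟨e_i,e_j⟩ = δ_{ij}, ⟨f_i,f_j⟩ = a²δ_{ij}, ⟨e_i,f_j⟩ = 0 for a > 0, a ≠ 1, let W = span(e₁+f₁, e₂−f₂, e₃+f₃) with orthonormal frame Y₁,Y₂,Y₃ obtained by normalizing these vectors, and Y₄ = (√(1+a²)/a)(e₁ − f₁/a²). Then Σ_{i=1}^3 ⟨[Y_i,Y₁]^T, [Y_i,Y₄]^T⟩ = -4(a²-1)/(a(1+a²)²) ≠ 0, where (·)^T is the orthogonal projection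 onto W. -/
/-!
Because `[eᵢ, fⱼ] = 0`, each bracket `[Yᵢ, Y₁]`, `[Yᵢ, Y₄]` lies in a single plane `span{e_k, f_k}`,
and since the generators `e_k ± f_k` of `W` are orthogonal, `W`-projection maps that plane onto the
line through `e_k ± f_k`. For `i = 1` both brackets vanish (`Y₁` and `Y₄` lie in `span{e₁, f₁}`),
while `i = 2` and `i = 3` each contribute `-2(a² - 1)/(a(1 + a²)²)`.
-/

open scoped RealInnerProductSpace

theorem LinearMap.apply_self_eq_zero_of_antisymm {R M N : Type*} [Field R] [NeZero (2 : R)]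
    [AddCommGroup M] [Module R M] [AddCommGroup N] [Module R N] (b : M →ₗ[R] M →ₗ[R] N)
    (hskew : ∀ x y, b x y = -b y x) (x : M) : b x x = 0 := by
  have h : (2 : R) • b x x = 0 := by
    rw [two_smul]
    nth_rw 1 [hskew]
    exact neg_add_cancel _
  exact (smul_eq_zero.1 h).resolve_left two_ne_zero

theorem Submodule.eq_starProjection_span_of_mem_of_inner_eq_zero {E : Type*}
    [NormedAddCommGroup E] [InnerProductSpace ℝ E] {S : Set E}
    [(span ℝ S).HasOrthogonalProjection] {v w : E} (hw : w ∈ span ℝ S)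
    (h : ∀ u ∈ S, ⟪v - w, u⟫ = 0) : (span ℝ S).starProjection v = w := by
  refine eq_starProjection_of_mem_of_inner_eq_zero hw fun u hu => ?_
  exact span_induction h (inner_zero_right _)
    (fun x y _ _ hx hy => by rw [inner_add_right, hx, hy, add_zero])
    (fun c x _ hx => by rw [inner_smul_right, hx, mul_zero]) hu

section TwistedDiagonal

variable {E : Type*} [NormedAddCommGroup E] [InnerProductSpace ℝ E] {e f : Fin 3 → E} {a : ℝ}

variable (e f) in
abbrev twistedDiagonal : Submodule ℝ E := Submodule.span ℝ {e 0 + f 0, e 1 - f 1, e 2 + f 2}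

variable [(twistedDiagonal e f).HasOrthogonalProjection]

theorem starProjection_twistedDiagonal_e_one
    (hee : ∀ i j, ⟪e i, e j⟫ = if i = j then 1 else 0)
    (hff : ∀ i j, ⟪f i, f j⟫ = if i = j then a ^ 2 else 0) (hef : ∀ i j, ⟪e i, f j⟫ = 0) :
    (twistedDiagonal e f).starProjection (e 1) = (1 + a ^ 2)⁻¹ • (e 1 - f 1) := by
  have hfe : ∀ i j, ⟪f i, e j⟫ = 0 := fun i j => by rw [real_inner_comm, hef]
  apply Submodule.eq_starProjection_span_of_mem_of_inner_eq_zero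
    (Submodule.smul_mem _ _ (Submodule.subset_span (by simp)))
  rintro u (rfl | rfl | rfl) <;>
    simp only [inner_add_right, inner_sub_left, inner_sub_right,
      real_inner_smul_left, hee, hff, hef, hfe, Fin.isValue, Fin.reduceEq, ↓reduceIte] <;>
    field_simp <;> ring

theorem starProjection_twistedDiagonal_e_two
    (hee : ∀ i j, ⟪e i, e j⟫ = if i = j then 1 else 0)
    (hff : ∀ i j, ⟪f i, f j⟫ = if i = j then a ^ 2 else 0) (hef : ∀ i j, ⟪e i, f j⟫ = 0) :
    (twistedDiagonal e f).starProjection (e 2) = (1 + a ^ 2)⁻¹ • (e 2 + f 2) := by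
  have hfe : ∀ i j, ⟪f i, e j⟫ = 0 := fun i j => by rw [real_inner_comm, hef]
  apply Submodule.eq_starProjection_span_of_mem_of_inner_eq_zero
    (Submodule.smul_mem _ _ (Submodule.subset_span (by simp)))
  rintro u (rfl | rfl | rfl) <;>
    simp only [inner_add_left, inner_add_right, inner_sub_left, inner_sub_right,
      real_inner_smul_left, hee, hff, hef, hfe, Fin.isValue, Fin.reduceEq, ↓reduceIte] <;>
    field_simp <;> ring

theorem starProjection_twistedDiagonal_f_one
    (hee : ∀ i j, ⟪e i, e j⟫ = if i = j then 1 else 0)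
    (hff : ∀ i j, ⟪f i, f j⟫ = if i = j then a ^ 2 else 0) (hef : ∀ i j, ⟪e i, f j⟫ = 0) :
    (twistedDiagonal e f).starProjection (f 1) = -(a ^ 2 / (1 + a ^ 2)) • (e 1 - f 1) := by
  have h : (twistedDiagonal e f).starProjection (e 1 - f 1) = e 1 - f 1 :=
    Submodule.starProjection_eq_self_iff.2 (Submodule.subset_span (by simp))
  rw [map_sub, starProjection_twistedDiagonal_e_one hee hff hef] at h
  have hc : -(a ^ 2 / (1 + a ^ 2)) = (1 + a ^ 2)⁻¹ - 1 := by field_simp; ring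
  rw [hc, sub_smul, one_smul]
  exact eq_sub_of_add_eq' (sub_eq_iff_eq_add.1 h).symm

theorem starProjection_twistedDiagonal_f_two
    (hee : ∀ i j, ⟪e i, e j⟫ = if i = j then 1 else 0)
    (hff : ∀ i j, ⟪f i, f j⟫ = if i = j then a ^ 2 else 0) (hef : ∀ i j, ⟪e i, f j⟫ = 0) :
    (twistedDiagonal e f).starProjection (f 2) = (a ^ 2 / (1 + a ^ 2)) • (e 2 + f 2) := by
  have h : (twistedDiagonal e f).starProjection (e 2 + f 2) = e 2 + f 2 :=
    Submodule.starProjection_eq_self_iff.2 (Submodule.subset_span (by simp))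
  rw [map_add, starProjection_twistedDiagonal_e_two hee hff hef] at h
  have hc : a ^ 2 / (1 + a ^ 2) = 1 - (1 + a ^ 2)⁻¹ := by field_simp; ring
  rw [hc, sub_smul, one_smul]
  exact eq_sub_of_add_eq' h

end TwistedDiagonal

theorem stmt13_general {E : Type*} [NormedAddCommGroup E] [InnerProductSpace ℝ E]
    [FiniteDimensional ℝ E]
    (b : E →ₗ[ℝ] E →ₗ[ℝ] E)
    (hskew : ∀ X Y : E, b X Y = - b Y X)
    (e f : Fin 3 → E)
    (he01 : b (e 0) (e 1) = e 2) (he20 : b (e 2) (e 0) = e 1)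
    (hf01 : b (f 0) (f 1) = f 2) (hf20 : b (f 2) (f 0) = f 1)
    (hef : ∀ i j, b (e i) (f j) = 0)
    (a : ℝ) (ha : 0 < a) (ha1 : a ≠ 1)
    (hee : ∀ i j, ⟪e i, e j⟫ = if i = j then 1 else 0)
    (hff : ∀ i j, ⟪f i, f j⟫ = if i = j then a ^ 2 else 0)
    (heforth : ∀ i j, ⟪e i, f j⟫ = 0)
    (W : Submodule ℝ E)
    (hW : W = Submodule.span ℝ {e 0 + f 0, e 1 - f 1, e 2 + f 2})
    (Y : Fin 3 → E)
    (hY : Y = ![(Real.sqrt (1 + a ^ 2))⁻¹ • (e 0 + f 0),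
      (Real.sqrt (1 + a ^ 2))⁻¹ • (e 1 - f 1),
      (Real.sqrt (1 + a ^ 2))⁻¹ • (e 2 + f 2)])
    (Y4 : E)
    (hY4 : Y4 = (Real.sqrt (1 + a ^ 2) / a) • (e 0 - (a ^ 2)⁻¹ • f 0)) :
    (∑ i : Fin 3, ⟪((Submodule.orthogonalProjection W (b (Y i) (Y 0))) : E),
        ((Submodule.orthogonalProjection W (b (Y i) Y4)) : E)⟫)
      = -4 * (a ^ 2 - 1) / (a * (1 + a ^ 2) ^ 2)
    ∧ -4 * (a ^ 2 - 1) / (a * (1 + a ^ 2) ^ 2) ≠ 0 := by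
  subst hW hY hY4
  have hself := b.apply_self_eq_zero_of_antisymm hskew
  have hfe : ∀ i j, b (f i) (e j) = 0 := fun i j => by rw [hskew, hef, neg_zero]
  have he10 : b (e 1) (e 0) = -e 2 := by rw [hskew, he01]
  have hf10 : b (f 1) (f 0) = -f 2 := by rw [hskew, hf01]
  have hfeorth : ∀ i j, ⟪f i, e j⟫ = 0 := fun i j => by rw [real_inner_comm, heforth]
  have hs : √(1 + a ^ 2) ^ 2 = 1 + a ^ 2 := Real.sq_sqrt (by positivity)
  have ha2 : a ^ 2 ≠ 1 := fun h => ha1 ((pow_eq_one_iff_of_nonneg ha.le two_ne_zero).1 h)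
  refine ⟨?_, div_ne_zero (mul_ne_zero (by norm_num) (sub_ne_zero.2 ha2)) (by positivity)⟩
  simp only [← Submodule.starProjection_apply, Fin.sum_univ_three, Matrix.cons_val_zero,
    Matrix.cons_val_one, Matrix.cons_val_two, Matrix.head_cons, Matrix.tail_cons]
  simp only [map_add, map_sub, map_smul, map_neg, LinearMap.add_apply, LinearMap.sub_apply,
    LinearMap.smul_apply, hself, hef, hfe, he10, hf10, he20, hf20, map_zero, add_zero, zero_add,
    sub_zero, zero_sub, smul_zero, inner_zero_right,
    starProjection_twistedDiagonal_e_one hee hff heforth,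
    starProjection_twistedDiagonal_f_one hee hff heforth,
    starProjection_twistedDiagonal_e_two hee hff heforth,
    starProjection_twistedDiagonal_f_two hee hff heforth]
  simp only [inner_add_left, inner_add_right, inner_sub_left, inner_sub_right, inner_neg_left,
    inner_neg_right, real_inner_smul_left, real_inner_smul_right, hee, hff, heforth, hfeorth,
    Fin.isValue, ↓reduceIte]
  field_simp
  rw [hs]
  ring

/-- In `𝔰𝔬(3) ⊕ 𝔰𝔬(3)` with the biinvariant inner product scaled by `a²`
on the second factor, with `W = span(e₁+f₁, e₂−f₂, e₃+f₃)`, the orthonormal frame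
`Y₁,Y₂,Y₃` of `W` and `Y₄ = (√(1+a²)/a)(e₁ − f₁/a²)`, one has
`Σᵢ ⟪[Yᵢ,Y₁]^T, [Yᵢ,Y₄]^T⟫ = -4(a²-1)/(a(1+a²)²) ≠ 0`. -/
theorem stmt13 {E : Type*} [NormedAddCommGroup E] [InnerProductSpace ℝ E]
    [FiniteDimensional ℝ E]
    (b : E →ₗ[ℝ] E →ₗ[ℝ] E)
    (hskew : ∀ X Y : E, b X Y = - b Y X)
    (e f : Fin 3 → E)
    (he01 : b (e 0) (e 1) = e 2) (he12 : b (e 1) (e 2) = e 0) (he20 : b (e 2) (e 0) = e 1)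
    (hf01 : b (f 0) (f 1) = f 2) (hf12 : b (f 1) (f 2) = f 0) (hf20 : b (f 2) (f 0) = f 1)
    (hef : ∀ i j, b (e i) (f j) = 0)
    (a : ℝ) (ha : 0 < a) (ha1 : a ≠ 1)
    (hee : ∀ i j, ⟪e i, e j⟫ = if i = j then 1 else 0)
    (hff : ∀ i j, ⟪f i, f j⟫ = if i = j then a ^ 2 else 0)
    (heforth : ∀ i j, ⟪e i, f j⟫ = 0)
    (W : Submodule ℝ E)
    (hW : W = Submodule.span ℝ {e 0 + f 0, e 1 - f 1, e 2 + f 2})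
    (Y : Fin 3 → E)
    (hY : Y = ![(Real.sqrt (1 + a ^ 2))⁻¹ • (e 0 + f 0),
      (Real.sqrt (1 + a ^ 2))⁻¹ • (e 1 - f 1),
      (Real.sqrt (1 + a ^ 2))⁻¹ • (e 2 + f 2)])
    (Y4 : E)
    (hY4 : Y4 = (Real.sqrt (1 + a ^ 2) / a) • (e 0 - (a ^ 2)⁻¹ • f 0)) :
    (∑ i : Fin 3, ⟪((Submodule.orthogonalProjection W (b (Y i) (Y 0))) : E),
        ((Submodule.orthogonalProjection W (b (Y i) Y4)) : E)⟫)
      = -4 * (a ^ 2 - 1) / (a * (1 + a ^ 2) ^ 2)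
    ∧ -4 * (a ^ 2 - 1) / (a * (1 + a ^ 2) ^ 2) ≠ 0 :=
  stmt13_general b hskew e f he01 he20 hf01 hf20 hef a ha ha1 hee hff heforth W hW Y hY Y4 hY4
end
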